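/- arXiv:math/0702882 — 2 statements merged into one kernel-verified Lean document; each statement's English description precedes it below -/
import Mathlib

section
/- Let n = 2, A(x,y) = (y,x), and b = 1. If g ∈ H¹(ℝ²) satisfies |x| g ∉ L²(ℝ²), then the function f(x,y) := g(x,y) e^{-ixy} satisfies (i∇ - A) f ∈ L²(ℝ²)² (so f lies in the magnetic Sobolev space H¹_A), but f does not belong to the weighted space Σ = { u ∈ H¹(ℝ²) : (1+|x|) u ∈ L² }. -/
open MeasureTheory Complex

noncomputable def c1 : ℝ × ℝ →L[ℝ] ℂ :=
  Complex.ofRealCLM.comp (ContinuousLinearMap.fst ℝ ℝ ℝ)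
noncomputable def c2 : ℝ × ℝ →L[ℝ] ℂ :=
  Complex.ofRealCLM.comp (ContinuousLinearMap.snd ℝ ℝ ℝ)

lemma norm_e (x y : ℝ) : ‖Complex.exp (-Complex.I * x * y)‖ = 1 := by
  rw [Complex.norm_exp]
  simp

lemma hasFDerivAt_f (g : ℝ × ℝ → ℂ) (hgdiff : Differentiable ℝ g)
    (f : ℝ × ℝ → ℂ)
    (hf : ∀ p : ℝ × ℝ, f p = g p * Complex.exp (-Complex.I * p.1 * p.2))
    (p : ℝ × ℝ) :
    HasFDerivAt f
      (g p • (Complex.exp (-Complex.I * p.1 * p.2) •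
          ((-Complex.I) • ((p.1 : ℂ) • c2 + (p.2 : ℂ) • c1))) +
        Complex.exp (-Complex.I * p.1 * p.2) • fderiv ℝ g p) p := by
  have h1 : HasFDerivAt (fun q : ℝ × ℝ => (q.1 : ℂ)) c1 p := c1.hasFDerivAt
  have h2 : HasFDerivAt (fun q : ℝ × ℝ => (q.2 : ℂ)) c2 p := c2.hasFDerivAt
  have hmul := h1.mul h2
  have hconst := hmul.const_mul (-Complex.I)
  have hexp := hconst.cexp
  have hF := ((hgdiff p).hasFDerivAt).mul hexp
  have : (fun q : ℝ × ℝ => g q * Complex.exp (-Complex.I * ((q.1 : ℂ) * q.2))) = f := by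
    funext q; rw [hf q]; ring_nf
  simp only [Pi.mul_def] at hF
  rw [this] at hF
  simp only [mul_assoc]
  exact hF

/-- with `A(x,y) = (y,x)` on `ℝ²`, if `g ∈ H¹(ℝ²)` with
`|x| g ∉ L²`, then `f(x,y) = g(x,y) e^{-ixy}` lies in the magnetic Sobolev
space `H¹_A` (i.e. `f ∈ L²` and `(i∇ - A) f ∈ L²`) but not in
`Σ = {u ∈ H¹ : (1+|(x,y)|) u ∈ L²}`. -/
theorem magnetic_sobolev_ne_weighted_space
    (g : ℝ × ℝ → ℂ) (hgdiff : Differentiable ℝ g)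
    (hg : MemLp g 2 (volume : Measure (ℝ × ℝ)))
    (hgrad : MemLp (fun p => fderiv ℝ g p) 2 (volume : Measure (ℝ × ℝ)))
    (hxg : ¬ MemLp (fun p : ℝ × ℝ => ((|p.1| : ℝ) : ℂ) * g p) 2 (volume : Measure (ℝ × ℝ)))
    (f : ℝ × ℝ → ℂ)
    (hf : ∀ p : ℝ × ℝ, f p = g p * Complex.exp (-Complex.I * p.1 * p.2)) :
    MemLp f 2 (volume : Measure (ℝ × ℝ)) ∧
    MemLp (fun p : ℝ × ℝ => Complex.I * fderiv ℝ f p (1, 0) - (p.2 : ℂ) * f p) 2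
      (volume : Measure (ℝ × ℝ)) ∧
    MemLp (fun p : ℝ × ℝ => Complex.I * fderiv ℝ f p (0, 1) - (p.1 : ℂ) * f p) 2
      (volume : Measure (ℝ × ℝ)) ∧
    ¬ MemLp (fun p : ℝ × ℝ => ((1 + ‖p‖ : ℝ) : ℂ) * f p) 2 (volume : Measure (ℝ × ℝ)) := by
  have hD := hasFDerivAt_f g hgdiff f hf
  have hnorm1 : (‖((1 : ℝ), (0 : ℝ))‖ : ℝ) = 1 := by
    simp [Prod.norm_def]
  have hnorm2 : (‖((0 : ℝ), (1 : ℝ))‖ : ℝ) = 1 := by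
    simp [Prod.norm_def]
  have hcont_e : Continuous fun p : ℝ × ℝ => Complex.exp (-Complex.I * p.1 * p.2) := by
    fun_prop
  have hfeq : f = fun p => g p * Complex.exp (-Complex.I * p.1 * p.2) := funext hf
  have hf_meas : AEStronglyMeasurable f (volume : Measure (ℝ × ℝ)) := by
    rw [hfeq]; exact (hgdiff.continuous.mul hcont_e).aestronglyMeasurable
  have hfL2 : MemLp f 2 (volume : Measure (ℝ × ℝ)) := by
    refine hg.of_le hf_meas (Filter.Eventually.of_forall fun p => ?_)
    rw [hf p, norm_mul, norm_e, mul_one]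
  refine ⟨hfL2, ?_, ?_, ?_⟩
  · have heq : (fun p : ℝ × ℝ => Complex.I * fderiv ℝ f p (1, 0) - (p.2 : ℂ) * f p)
        = fun p => Complex.I * Complex.exp (-Complex.I * p.1 * p.2) * fderiv ℝ g p (1, 0) := by
      funext p
      rw [(hD p).fderiv, hf p]
      simp [c1, c2]
      ring_nf
      rw [Complex.I_sq]
      ring
    rw [heq]
    refine hgrad.of_le ?_ (Filter.Eventually.of_forall fun p => ?_)
    · exact ((continuous_const.mul hcont_e).measurable.mul
        (measurable_fderiv_apply_const ℝ g ((1 : ℝ), (0 : ℝ)))).aestronglyMeasurable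
    · rw [norm_mul, norm_mul, Complex.norm_I, one_mul, norm_e, one_mul]
      calc ‖fderiv ℝ g p (1, 0)‖ ≤ ‖fderiv ℝ g p‖ * ‖((1:ℝ),(0:ℝ))‖ :=
            (fderiv ℝ g p).le_opNorm _
        _ = ‖fderiv ℝ g p‖ := by rw [hnorm1, mul_one]
  · have heq : (fun p : ℝ × ℝ => Complex.I * fderiv ℝ f p (0, 1) - (p.1 : ℂ) * f p)
        = fun p => Complex.I * Complex.exp (-Complex.I * p.1 * p.2) * fderiv ℝ g p (0, 1) := by
      funext p
      rw [(hD p).fderiv, hf p]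
      simp [c1, c2]
      ring_nf
      rw [Complex.I_sq]
      ring
    rw [heq]
    refine hgrad.of_le ?_ (Filter.Eventually.of_forall fun p => ?_)
    · exact ((continuous_const.mul hcont_e).measurable.mul
        (measurable_fderiv_apply_const ℝ g ((0 : ℝ), (1 : ℝ)))).aestronglyMeasurable
    · rw [norm_mul, norm_mul, Complex.norm_I, one_mul, norm_e, one_mul]
      calc ‖fderiv ℝ g p (0, 1)‖ ≤ ‖fderiv ℝ g p‖ * ‖((0:ℝ),(1:ℝ))‖ :=
            (fderiv ℝ g p).le_opNorm _
        _ = ‖fderiv ℝ g p‖ := by rw [hnorm2, mul_one]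
  · intro hmem
    apply hxg
    refine hmem.of_le ?_ (Filter.Eventually.of_forall fun p => ?_)
    · exact ((Complex.continuous_ofReal.comp (_root_.continuous_abs.comp continuous_fst)).measurable.mul
        hgdiff.continuous.measurable).aestronglyMeasurable
    · rw [norm_mul, norm_mul, hf p, norm_mul, norm_e, mul_one]
      have h1 : ‖((|p.1| : ℝ) : ℂ)‖ = |p.1| := by
        rw [Complex.norm_real, Real.norm_eq_abs, _root_.abs_abs]
      have h2 : ‖((1 + ‖p‖ : ℝ) : ℂ)‖ = 1 + ‖p‖ := by
        rw [Complex.norm_real, Real.norm_eq_abs, _root_.abs_of_nonneg (by positivity)]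
      rw [h1, h2]
      have : |p.1| ≤ 1 + ‖p‖ := le_trans (norm_fst_le p) (by linarith [norm_nonneg p])
      exact mul_le_mul_of_nonneg_right this (norm_nonneg _)
end

section
/- Let f : ℝ^n × ℂ → ℂ be measurable with f(x,0) = 0 and |f(x,z₁) - f(x,z₂)| ≤ M (1 + |z₁|^α + |z₂|^α) |z₁ - z₂| for a.e. x and all z₁, z₂ ∈ ℂ, and f(x,z) = (z/|z|) f(x,|z|) for z ≠ 0. Define f̃₁(x,z) = f(x,z) if |z| ≤ 1 and f̃₁(x,z) = f(x,1) z if |z| ≥ 1, and f̃₂ = f - f̃₁. Then f̃₁ satisfies |f̃₁(x,z₁) - f̃₁(x,z₂)| ≤ C M |z₁ - z₂| for some absolute constant C (i.e. f̃₁ is globally Lipschitz in z, uniformly in x). -/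
/-- under the nonlinearity assumptions on `f`, the truncation
`f̃₁(x,z) = f(x,z)` for `|z| ≤ 1`, `f̃₁(x,z) = f(x,1)·z` for `|z| ≥ 1`, is
globally Lipschitz in `z` uniformly in `x`, with constant `C·M` for an
absolute constant `C`. -/
theorem truncated_nonlinearity_lipschitz {n : ℕ} :
    ∃ C : ℝ, 0 < C ∧
      ∀ (f : (Fin n → ℝ) → ℂ → ℂ) (M α : ℝ), 0 ≤ M → 0 ≤ α →
        Measurable (fun p : (Fin n → ℝ) × ℂ => f p.1 p.2) →
        (∀ x, f x 0 = 0) →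
        (∀ x z₁ z₂, ‖f x z₁ - f x z₂‖ ≤ M * (1 + ‖z₁‖ ^ α + ‖z₂‖ ^ α) * ‖z₁ - z₂‖) →
        (∀ x (z : ℂ), z ≠ 0 → f x z = (z / (‖z‖ : ℂ)) * f x ((‖z‖ : ℝ) : ℂ)) →
        ∀ (f₁ : (Fin n → ℝ) → ℂ → ℂ),
          (∀ x z, f₁ x z = if ‖z‖ ≤ 1 then f x z else f x 1 * z) →
          ∀ x z₁ z₂, ‖f₁ x z₁ - f₁ x z₂‖ ≤ C * M * ‖z₁ - z₂‖ := by
  refine ⟨9, by norm_num, ?_⟩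
  intro f M α hM hα _hmeas hzero hlip hcov f₁ hf₁ x z₁ z₂
  -- basic Lipschitz bound on the unit ball
  have bound3 : ∀ a b : ℂ, ‖a‖ ≤ 1 → ‖b‖ ≤ 1 → ‖f x a - f x b‖ ≤ 3 * M * ‖a - b‖ := by
    intro a b ha hb
    have h1 : ‖a‖ ^ α ≤ 1 := Real.rpow_le_one (norm_nonneg _) ha hα
    have h2 : ‖b‖ ^ α ≤ 1 := Real.rpow_le_one (norm_nonneg _) hb hα
    have h3 : (0:ℝ) ≤ ‖a - b‖ := norm_nonneg _
    have h5 := hlip x a b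
    have h4 : M * (1 + ‖a‖ ^ α + ‖b‖ ^ α) * ‖a - b‖ ≤ M * 3 * ‖a - b‖ := by
      gcongr
      linarith
    linarith
  have hM1 : ‖f x 1‖ ≤ 3 * M := by
    have := bound3 1 0 (by simp) (by simp)
    simpa [hzero] using this
  -- key mixed estimate
  have key : ∀ a b : ℂ, ‖a‖ ≤ 1 → ¬ ‖b‖ ≤ 1 → ‖f x a - f x 1 * b‖ ≤ 9 * M * ‖a - b‖ := by
    intro a b ha hb
    push_neg at hb
    have hbpos : (0:ℝ) < ‖b‖ := lt_trans one_pos hb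
    have hbne : b ≠ 0 := by simpa using hbpos.ne'
    set w : ℂ := b / (‖b‖ : ℂ) with hwdef
    have hbn : ‖(‖b‖ : ℂ)‖ = ‖b‖ := by
      simp [Complex.norm_real, abs_of_pos hbpos]
    have hwnorm : ‖w‖ = 1 := by
      rw [hwdef, norm_div, hbn, div_self hbpos.ne']
    have hwne : w ≠ 0 := by
      intro h; rw [h] at hwnorm; simp at hwnorm
    have hw : f x w = w * f x 1 := by
      have := hcov x w hwne
      rw [hwnorm] at this
      simpa using this
    have hwb : ‖w - b‖ = ‖b‖ - 1 := by
      have hcne : ((‖b‖ : ℝ) : ℂ) ≠ 0 := by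
        exact_mod_cast hbpos.ne'
      have heq : w - b = ((1 / ‖b‖ - 1 : ℝ) : ℂ) * b := by
        have hne : ‖b‖ ≠ 0 := hbpos.ne'
        rw [hwdef]
        push_cast
        field_simp [hne]
      have habs : |1 / ‖b‖ - 1| = 1 - 1 / ‖b‖ := by
        rw [abs_of_nonpos]
        · ring
        · have : (1:ℝ)/‖b‖ ≤ 1 := by
            rw [div_le_one hbpos]; linarith
          linarith
      have hne : ‖b‖ ≠ 0 := hbpos.ne'
      rw [heq, norm_mul, Complex.norm_real, Real.norm_eq_abs, habs]
      field_simp [hne]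
    have hwb' : ‖w - b‖ ≤ ‖a - b‖ := by
      rw [hwb]
      have := norm_sub_norm_le b a
      have h2 : ‖b - a‖ = ‖a - b‖ := norm_sub_rev _ _
      linarith
    have haw : ‖a - w‖ ≤ 2 * ‖a - b‖ := by
      calc ‖a - w‖ ≤ ‖a - b‖ + ‖b - w‖ := norm_sub_le_norm_sub_add_norm_sub _ _ _
        _ = ‖a - b‖ + ‖w - b‖ := by rw [norm_sub_rev b w]
        _ ≤ 2 * ‖a - b‖ := by linarith
    have step1 : ‖f x a - f x w‖ ≤ 3 * M * ‖a - w‖ := bound3 a w ha (le_of_eq hwnorm)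
    have step2 : ‖f x w - f x 1 * b‖ ≤ 3 * M * ‖w - b‖ := by
      rw [hw]
      calc ‖w * f x 1 - f x 1 * b‖ = ‖f x 1 * (w - b)‖ := by ring_nf
        _ = ‖f x 1‖ * ‖w - b‖ := norm_mul _ _
        _ ≤ 3 * M * ‖w - b‖ :=
          mul_le_mul_of_nonneg_right hM1 (norm_nonneg _)
    calc ‖f x a - f x 1 * b‖ ≤ ‖f x a - f x w‖ + ‖f x w - f x 1 * b‖ :=
          norm_sub_le_norm_sub_add_norm_sub _ _ _
      _ ≤ 3 * M * ‖a - w‖ + 3 * M * ‖w - b‖ := add_le_add step1 step2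
      _ ≤ 3 * M * (2 * ‖a - b‖) + 3 * M * ‖a - b‖ := by
          gcongr
      _ = 9 * M * ‖a - b‖ := by ring
  rw [hf₁ x z₁, hf₁ x z₂]
  have hnn : (0:ℝ) ≤ ‖z₁ - z₂‖ := norm_nonneg _
  split_ifs with h1 h2 h2
  · calc ‖f x z₁ - f x z₂‖ ≤ 3 * M * ‖z₁ - z₂‖ := bound3 _ _ h1 h2
      _ ≤ 9 * M * ‖z₁ - z₂‖ := by nlinarith
  · exact key z₁ z₂ h1 h2
  · have := key z₂ z₁ h2 h1
    calc ‖f x 1 * z₁ - f x z₂‖ = ‖f x z₂ - f x 1 * z₁‖ := norm_sub_rev _ _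
      _ ≤ 9 * M * ‖z₂ - z₁‖ := this
      _ = 9 * M * ‖z₁ - z₂‖ := by rw [norm_sub_rev]
  · calc ‖f x 1 * z₁ - f x 1 * z₂‖ = ‖f x 1‖ * ‖z₁ - z₂‖ := by
          rw [← norm_mul, mul_sub]
      _ ≤ 3 * M * ‖z₁ - z₂‖ := mul_le_mul_of_nonneg_right hM1 hnn
      _ ≤ 9 * M * ‖z₁ - z₂‖ := by nlinarith
end
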